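/- For real numbers x ≠ x̃, the integral ∫_ℝ 1_{|t−x|≤1} 1_{|t−x̃|≤1} |t−x|^{−1/2} |t−x̃|^{−1/2} dt equals ln( (2√(1−|x−x̃|) − (|x−x̃|−2)) / |2√(1−|x−x̃|) + (|x−x̃|−2)| ) + π if |x−x̃| < 1, and equals −2 arctan( (|x−x̃|−2) / (2√(|x−x̃|−1)) ) if 1 < |x−x̃| ≤ 2 (and 0 if |x−x̃| > 2). -/

import Mathlib

/-!
For `x < y` the integrand `|t - x|^(-1/2) |t - y|^(-1/2)` has elementary antiderivatives:
`arcsin ((2t - x - y) / (y - x))` on `(x, y)` and `2 log (√(t - x) + √(t - y))` on `(y, ∞)`;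
the piece left of `x` mirrors the right one under `t ↦ x + y - t`. Being a nonnegative
derivative, the integrand is automatically integrable on each piece. The support is
`[y - 1, x + 1]`: for `y - x < 1` the middle piece contributes `π` and the two outer pieces
the logarithm, while for `1 < y - x ≤ 2` only an arcsine piece remains.
-/

open Real MeasureTheory Set intervalIntegral

noncomputable section

theorem intervalIntegrable_and_integral_eq_sub_of_hasDerivAt_of_nonneg {f f' : ℝ → ℝ} {a b : ℝ}
    (hab : a ≤ b) (hcont : ContinuousOn f (Icc a b))
    (hderiv : ∀ t ∈ Ioo a b, HasDerivAt f (f' t) t) (hpos : ∀ t ∈ Ioo a b, 0 ≤ f' t) :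
    IntervalIntegrable f' volume a b ∧ ∫ t in a..b, f' t = f b - f a := by
  have hint : IntervalIntegrable f' volume a b :=
    (intervalIntegrable_iff_integrableOn_Ioc_of_le hab).2
      (integrableOn_deriv_of_nonneg hcont hderiv hpos)
  exact ⟨hint, integral_eq_sub_of_hasDerivAt_of_le hab hcont hderiv hint⟩

def invSqrtProd (x y t : ℝ) : ℝ := |t - x| ^ (-(1 / 2 : ℝ)) * |t - y| ^ (-(1 / 2 : ℝ))

def overlapIntegral (x y : ℝ) : ℝ :=
  ∫ t, if |t - x| ≤ 1 ∧ |t - y| ≤ 1 then invSqrtProd x y t else 0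

section invSqrtProd

variable {x y t : ℝ}

theorem invSqrtProd_comm (x y t : ℝ) : invSqrtProd x y t = invSqrtProd y x t :=
  mul_comm _ _

theorem invSqrtProd_nonneg (x y t : ℝ) : 0 ≤ invSqrtProd x y t := by
  unfold invSqrtProd; positivity

theorem invSqrtProd_add_sub (x y t : ℝ) : invSqrtProd x y (x + y - t) = invSqrtProd x y t := by
  rw [invSqrtProd_comm, invSqrtProd, invSqrtProd, show x + y - t - y = -(t - x) by ring,
    show x + y - t - x = -(t - y) by ring, abs_neg, abs_neg]

theorem invSqrtProd_eq_inv_sqrt (x y t : ℝ) :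
    invSqrtProd x y t = (√|(t - x) * (t - y)|)⁻¹ := by
  rw [invSqrtProd, ← mul_rpow (abs_nonneg _) (abs_nonneg _), ← abs_mul, rpow_neg (abs_nonneg _),
    sqrt_eq_rpow]

theorem hasDerivAt_arcsin_invSqrtProd (hxt : x < t) (hty : t < y) :
    HasDerivAt (fun t => arcsin ((2 * t - x - y) / (y - x))) (invSqrtProd x y t) t := by
  have hyx : 0 < y - x := by linarith
  have hlin : HasDerivAt (fun t => (2 * t - x - y) / (y - x)) (2 / (y - x)) t := by
    simpa using ((((hasDerivAt_id t).const_mul 2).sub_const x).sub_const y).div_const (y - x)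
  have hu1 : -1 < (2 * t - x - y) / (y - x) := by rw [lt_div_iff₀ hyx]; linarith
  have hu2 : (2 * t - x - y) / (y - x) < 1 := by rw [div_lt_iff₀ hyx]; linarith
  have hP : 0 < (t - x) * (y - t) := by nlinarith
  have hsqrt : √(1 - ((2 * t - x - y) / (y - x)) ^ 2) = 2 / (y - x) * √((t - x) * (y - t)) := by
    rw [show 1 - ((2 * t - x - y) / (y - x)) ^ 2 = (2 / (y - x)) ^ 2 * ((t - x) * (y - t)) by
      field_simp; ring, sqrt_mul (by positivity), sqrt_sq (by positivity)]
  refine ((hasDerivAt_arcsin hu1.ne' hu2.ne).comp t hlin).congr_deriv ?_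
  rw [invSqrtProd_eq_inv_sqrt, hsqrt, show (t - x) * (t - y) = -((t - x) * (y - t)) by ring,
    abs_neg, abs_of_pos hP]
  field_simp

theorem hasDerivAt_log_invSqrtProd (hxt : x < t) (hyt : y < t) :
    HasDerivAt (fun t => 2 * log (√(t - x) + √(t - y))) (invSqrtProd x y t) t := by
  have ha : 0 < √(t - x) := sqrt_pos.2 (by linarith)
  have hb : 0 < √(t - y) := sqrt_pos.2 (by linarith)
  have hsqrt (c : ℝ) (hc : c < t) :
      HasDerivAt (fun t => √(t - c)) (1 / (2 * √(t - c)) * 1) t :=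
    (hasDerivAt_sqrt (sub_pos.2 hc).ne').comp t ((hasDerivAt_id t).sub_const c)
  have hsum : √(t - x) + √(t - y) ≠ 0 := by positivity
  refine ((((hsqrt x hxt).add (hsqrt y hyt)).log hsum).const_mul 2).congr_deriv ?_
  rw [invSqrtProd_eq_inv_sqrt, abs_of_pos (by nlinarith), sqrt_mul (by linarith)]
  simp only [Pi.add_apply]
  field_simp
  ring

end invSqrtProd

section pieces

variable {x y a b : ℝ}

theorem integral_invSqrtProd_between (hxa : x ≤ a) (hab : a ≤ b) (hby : b ≤ y) :
    IntervalIntegrable (invSqrtProd x y) volume a b ∧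
      ∫ t in a..b, invSqrtProd x y t =
        arcsin ((2 * b - x - y) / (y - x)) - arcsin ((2 * a - x - y) / (y - x)) :=
  intervalIntegrable_and_integral_eq_sub_of_hasDerivAt_of_nonneg hab
    (continuous_arcsin.comp (by fun_prop)).continuousOn
    (fun _ ht => hasDerivAt_arcsin_invSqrtProd (hxa.trans_lt ht.1) (ht.2.trans_le hby))
    (fun t _ => invSqrtProd_nonneg x y t)

theorem integral_invSqrtProd_right (hxy : x < y) (hya : y ≤ a) (hab : a ≤ b) :
    IntervalIntegrable (invSqrtProd x y) volume a b ∧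
      ∫ t in a..b, invSqrtProd x y t =
        2 * log (√(b - x) + √(b - y)) - 2 * log (√(a - x) + √(a - y)) := by
  refine intervalIntegrable_and_integral_eq_sub_of_hasDerivAt_of_nonneg hab ?_
    (fun t ht => hasDerivAt_log_invSqrtProd (by linarith [ht.1]) (hya.trans_lt ht.1))
    (fun t _ => invSqrtProd_nonneg x y t)
  refine (ContinuousOn.log (by fun_prop) fun t ht => ?_).const_smul (2 : ℝ)
  have : 0 < √(t - x) := sqrt_pos.2 (by linarith [ht.1])
  positivity

end pieces

section overlapIntegral

variable {x y : ℝ}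

theorem overlapIntegral_comm (x y : ℝ) : overlapIntegral x y = overlapIntegral y x := by
  simp only [overlapIntegral, invSqrtProd_comm x y, and_comm]

theorem overlapIntegral_of_two_lt_abs (h : 2 < |x - y|) : overlapIntegral x y = 0 := by
  have hempty (t : ℝ) : ¬(|t - x| ≤ 1 ∧ |t - y| ≤ 1) := fun ⟨hx, hy⟩ => by
    linarith [abs_sub_le x t y, abs_sub_comm x t]
  simp [overlapIntegral, hempty]

theorem overlapIntegral_eq_intervalIntegral (hxy : x ≤ y) (h : y ≤ x + 2) :
    overlapIntegral x y = ∫ t in (y - 1)..(x + 1), invSqrtProd x y t := by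
  have hsupp (t : ℝ) : (|t - x| ≤ 1 ∧ |t - y| ≤ 1) ↔ t ∈ Icc (y - 1) (x + 1) := by
    simp only [abs_le, mem_Icc]
    grind
  simp only [overlapIntegral, hsupp, ← indicator_apply]
  rw [MeasureTheory.integral_indicator measurableSet_Icc, integral_Icc_eq_integral_Ioc,
    ← integral_of_le (by linarith)]

theorem overlapIntegral_of_sub_lt_one (hxy : x < y) (h : y - x < 1) :
    overlapIntegral x y = 4 * log (1 + √(1 - (y - x))) - 2 * log (y - x) + π := by
  obtain ⟨hint_mid, hmid⟩ := integral_invSqrtProd_between le_rfl hxy.le le_rfl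
  obtain ⟨hint_right, hright⟩ := integral_invSqrtProd_right hxy le_rfl (by linarith : y ≤ x + 1)
  have hreflect : ∫ t in (y - 1)..x, invSqrtProd x y t = ∫ t in y..(x + 1), invSqrtProd x y t := by
    have := integral_comp_sub_left (a := y) (b := x + 1) (invSqrtProd x y) (x + y)
    simp only [invSqrtProd_add_sub, add_sub_add_left_eq_sub, add_sub_cancel_right] at this
    exact this.symm
  have hint_left : IntervalIntegrable (invSqrtProd x y) volume (y - 1) x := by
    simpa [invSqrtProd_add_sub] using (hint_right.comp_sub_left (x + y)).symm
  rw [overlapIntegral_eq_intervalIntegral hxy.le (by linarith),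
    ← integral_add_adjacent_intervals hint_left (hint_mid.trans hint_right),
    ← integral_add_adjacent_intervals hint_mid hint_right, hreflect, hmid, hright]
  have hyx : y - x ≠ 0 := by linarith
  rw [show (2 * y - x - y) / (y - x) = 1 by field_simp; ring,
    show (2 * x - x - y) / (y - x) = -1 by field_simp; ring, arcsin_one, arcsin_neg_one,
    add_sub_cancel_left, sqrt_one, sub_self, sqrt_zero, add_zero, log_sqrt (by linarith),
    show x + 1 - y = 1 - (y - x) by ring]
  ring

theorem overlapIntegral_of_one_lt_sub (h1 : 1 < y - x) (h2 : y - x ≤ 2) :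
    overlapIntegral x y = 2 * arcsin ((2 - (y - x)) / (y - x)) := by
  rw [overlapIntegral_eq_intervalIntegral (by linarith) (by linarith),
    (integral_invSqrtProd_between (by linarith) (by linarith) (by linarith)).2,
    show (2 * (y - 1) - x - y) / (y - x) = -((2 - (y - x)) / (y - x)) by ring,
    show (2 * (x + 1) - x - y) / (y - x) = (2 - (y - x)) / (y - x) by ring, arcsin_neg]
  ring

end overlapIntegral

theorem log_ratio_eq_four_mul_log_one_add_sqrt {d : ℝ} (h0 : 0 < d) (h1 : d < 1) :
    log ((2 * √(1 - d) - (d - 2)) / |2 * √(1 - d) + (d - 2)|) =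
      4 * log (1 + √(1 - d)) - 2 * log d := by
  set s := √(1 - d)
  have hs0 : 0 ≤ s := sqrt_nonneg _
  have hs2 : s ^ 2 = 1 - d := sq_sqrt (by linarith)
  have hs1 : s < 1 := by nlinarith
  have hnum : 2 * s - (d - 2) = (1 + s) ^ 2 := by nlinarith
  have hden : |2 * s + (d - 2)| = (1 - s) ^ 2 := by
    rw [abs_of_neg (by nlinarith)]; nlinarith
  -- `(1 + s) (1 - s) = d`
  have hratio : (1 + s) ^ 2 / (1 - s) ^ 2 = ((1 + s) ^ 2 / d) ^ 2 := by
    rw [div_pow, div_eq_div_iff (by nlinarith) (by positivity)]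
    linear_combination ((1 + s) ^ 2 * (d + 1 - s ^ 2)) * hs2
  rw [hnum, hden, hratio, log_pow, log_div (by positivity) h0.ne', log_pow]
  push_cast
  ring

theorem two_mul_arcsin_eq_neg_two_mul_arctan {d : ℝ} (h1 : 1 < d) :
    2 * arcsin ((2 - d) / d) = -2 * arctan ((d - 2) / (2 * √(d - 1))) := by
  have hd : 0 < d := by linarith
  have hs : 0 < √(d - 1) := sqrt_pos.2 (by linarith)
  have hs2 : √(d - 1) ^ 2 = d - 1 := sq_sqrt (by linarith)
  have hu1 : -1 < (2 - d) / d := by rw [lt_div_iff₀ hd]; linarith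
  have hu2 : (2 - d) / d < 1 := by rw [div_lt_iff₀ hd]; linarith
  have hsqrt : √(1 - ((2 - d) / d) ^ 2) = 2 * √(d - 1) / d := by
    rw [show 1 - ((2 - d) / d) ^ 2 = (2 * √(d - 1) / d) ^ 2 by
      rw [div_pow, div_pow, mul_pow, hs2]; field_simp; ring]
    exact sqrt_sq (by positivity)
  rw [arcsin_eq_arctan ⟨hu1, hu2⟩, hsqrt,
    show (2 - d) / d / (2 * √(d - 1) / d) = -((d - 2) / (2 * √(d - 1))) by field_simp; ring,
    arctan_neg]
  ring

/-- Explicit evaluation of `∫ 1_{|t−x|≤1} 1_{|t−x̃|≤1} |t−x|^{-1/2} |t−x̃|^{-1/2} dt`. -/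
theorem stmt18 (x y : ℝ) (hxy : x ≠ y) :
    (|x - y| < 1 →
      (∫ t : ℝ, (if |t - x| ≤ 1 ∧ |t - y| ≤ 1 then
          |t - x| ^ (-(1 / 2 : ℝ)) * |t - y| ^ (-(1 / 2 : ℝ)) else 0)) =
        Real.log ((2 * Real.sqrt (1 - |x - y|) - (|x - y| - 2)) /
            |2 * Real.sqrt (1 - |x - y|) + (|x - y| - 2)|) + Real.pi) ∧
    (1 < |x - y| → |x - y| ≤ 2 →
      (∫ t : ℝ, (if |t - x| ≤ 1 ∧ |t - y| ≤ 1 then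
          |t - x| ^ (-(1 / 2 : ℝ)) * |t - y| ^ (-(1 / 2 : ℝ)) else 0)) =
        -2 * Real.arctan ((|x - y| - 2) / (2 * Real.sqrt (|x - y| - 1)))) ∧
    (2 < |x - y| →
      (∫ t : ℝ, (if |t - x| ≤ 1 ∧ |t - y| ≤ 1 then
          |t - x| ^ (-(1 / 2 : ℝ)) * |t - y| ^ (-(1 / 2 : ℝ)) else 0)) = 0) := by
  show (|x - y| < 1 → overlapIntegral x y = _) ∧
    (1 < |x - y| → |x - y| ≤ 2 → overlapIntegral x y = _) ∧
    (2 < |x - y| → overlapIntegral x y = 0)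
  wlog hlt : x < y generalizing x y
  · rw [overlapIntegral_comm, abs_sub_comm]
    exact this y x hxy.symm (lt_of_le_of_ne (not_lt.1 hlt) hxy.symm)
  have hd : |x - y| = y - x := by rw [abs_sub_comm, abs_of_pos (sub_pos.2 hlt)]
  refine ⟨fun h1 => ?_, fun h1 h2 => ?_, fun h => overlapIntegral_of_two_lt_abs h⟩
  · rw [hd] at h1 ⊢
    rw [overlapIntegral_of_sub_lt_one hlt h1,
      log_ratio_eq_four_mul_log_one_add_sqrt (sub_pos.2 hlt) h1]
  · rw [hd] at h1 h2 ⊢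
    rw [overlapIntegral_of_one_lt_sub h1 h2, two_mul_arcsin_eq_neg_two_mul_arctan h1]
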